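/- For every n ≥ 1, the tensor rank of |W⟩^{⊗n}, regarded as a tripartite vector in (ℂ²)^{⊗n}⊗(ℂ²)^{⊗n}⊗(ℂ²)^{⊗n} with copies regrouped by party, is at least 2^{n+1} − 1. -/

import Mathlib

open TensorProduct

/-- Tripartite tensor rank: minimal number of product vectors summing to `ψ`. -/
noncomputable def tRank {A B C : Type*} [AddCommGroup A] [Module ℂ A]
    [AddCommGroup B] [Module ℂ B] [AddCommGroup C] [Module ℂ C]
    (ψ : A ⊗[ℂ] (B ⊗[ℂ] C)) : ℕ :=
  sInf {r | ∃ (a : Fin r → A) (b : Fin r → B) (c : Fin r → C),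
    ψ = ∑ i, a i ⊗ₜ[ℂ] (b i ⊗ₜ[ℂ] c i)}

/-- `(ℂ²)^{⊗n}`, realized as functions on `n`-bit strings. -/
abbrev V (n : ℕ) : Type := (Fin n → Bool) → ℂ

/-- the computational-basis vector `|s⟩` of `n` qubits. -/
noncomputable def qb {n : ℕ} (s : Fin n → Bool) : V n := Pi.single s 1

/-- `W^{⊗n}` regrouped party-wise: in copy `k` the excitation goes to party `f k`. -/
noncomputable def Wn (n : ℕ) : V n ⊗[ℂ] (V n ⊗[ℂ] V n) :=
  ∑ f : Fin n → Fin 3,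
    qb (fun k => decide (f k = 0)) ⊗ₜ[ℂ]
      (qb (fun k => decide (f k = 1)) ⊗ₜ[ℂ] qb (fun k => decide (f k = 2)))

/-- `GHZ^{⊗n}` regrouped party-wise: `∑ₓ |x⟩|x⟩|x⟩`. -/
noncomputable def GHZn (n : ℕ) : V n ⊗[ℂ] (V n ⊗[ℂ] V n) :=
  ∑ x : Fin n → Bool, qb x ⊗ₜ[ℂ] (qb x ⊗ₜ[ℂ] qb x)

/-!
Substitution method. Let `W^{⊗n} = ∑ᵢ aᵢ ⊗ bᵢ ⊗ cᵢ` with `r` terms, and contract the first factor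
with a functional `φ`: on bit strings this gives the matrix `M(y, z) = [y ⊓ z = ⊥] φ |(y ⊔ z)ᶜ⟩`,
whose rank is at most the number of `i` with `φ aᵢ ≠ 0`. The `aᵢ` span (`M(⊥, ·)` recovers `φ`),
so `φ` can be chosen to vanish on all but one vector of a basis extracted from them while
`φ |0…0⟩ ≠ 0`. Then at least `2ⁿ - 1` terms die, yet after `z ↦ zᶜ` the matrix `M` is triangular
for the order of `Fin n → Bool` with diagonal `φ |0…0⟩`, so it has rank `2ⁿ`; hence
`r ≥ 2ⁿ - 1 + 2ⁿ`.
-/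

open Finset Matrix

theorem exists_dual_apply_ne_zero_vanishing_on_finrank_sub_one {K A ι : Type*} [Field K]
    [AddCommGroup A] [Module K A] [Fintype ι] (a : ι → A)
    (ha : Submodule.span K (Set.range a) = ⊤) {e : A} (he : e ≠ 0) :
    ∃ φ : Module.Dual K A, φ e ≠ 0 ∧
      ∃ I : Finset ι, Module.finrank K A - 1 ≤ #I ∧ ∀ i ∈ I, φ (a i) = 0 := by
  classical
  obtain ⟨κ, j, hj, hspan, hli⟩ := exists_linearIndependent' K a
  have : Fintype κ := Fintype.ofInjective j hj
  let b : Module.Basis κ K A := .mk hli (by rw [hspan, ha])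
  obtain ⟨k, hk⟩ : ∃ k, b.repr e k ≠ 0 := by
    by_contra! h
    exact he (b.repr.injective (by ext k; simp [h]))
  refine ⟨b.coord k, hk, (univ.erase k).map ⟨j, hj⟩, ?_, ?_⟩
  · rw [card_map, card_erase_of_mem (mem_univ k), card_univ, Module.finrank_eq_card_basis b]
  · simp only [mem_map, mem_erase, Function.Embedding.coeFn_mk]
    rintro _ ⟨k', ⟨hk', -⟩, rfl⟩
    have hb : b k' = a (j k') := Module.Basis.mk_apply hli _ k'
    rw [← hb, Module.Basis.coord_apply, b.repr_self, Finsupp.single_apply, if_neg hk']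

namespace Matrix

variable {m n ι K : Type*} [Field K]

theorem det_eq_prod_diag_of_apply_eq_zero_of_not_le [Fintype m] [DecidableEq m] [PartialOrder m]
    {M : Matrix m m K} (hM : ∀ i j, ¬ i ≤ j → M i j = 0) : M.det = ∏ i, M i i := by
  let _ : Fintype (LinearExtension m) := ‹Fintype m›
  let _ : DecidableEq (LinearExtension m) := ‹DecidableEq m›
  let e : m ≃ LinearExtension m := Equiv.refl _
  rw [← det_reindex_self e, det_of_isUpperTriangular]
  · rfl
  · intro i j hji
    exact hM _ _ fun h => (toLinearExtension.monotone h).not_gt hji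

theorem rank_sum_vecMulVec_le [Fintype n] (s : Finset ι) (u : ι → m → K) (v : ι → n → K) :
    (∑ i ∈ s, vecMulVec (u i) (v i)).rank ≤ #s := by
  have : ∑ i ∈ s, vecMulVec (u i) (v i) =
      of (fun y (i : s) => u i y) * of (fun (i : s) z => v i z) := by
    ext y z
    simp [mul_apply, vecMulVec_apply, Matrix.sum_apply, ← Finset.sum_coe_sort s]
  rw [this]
  exact (rank_mul_le_left _ _).trans ((rank_le_card_width _).trans_eq (Fintype.card_coe s))

theorem rank_of_ite_inf_eq_bot {X : Type*} [Fintype X] [DecidableEq X] [BooleanAlgebra X]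
    (g : X → K) (hg : g ⊥ ≠ 0) :
    (of fun y z : X => if y ⊓ z = ⊥ then g (y ⊔ z)ᶜ else 0).rank = Fintype.card X := by
  set M := of fun y z : X => if y ⊓ z = ⊥ then g (y ⊔ z)ᶜ else 0
  let σ : X ≃ X := (compl_involutive (α := X)).toPerm
  have hdet : (M.submatrix id σ).det = g ⊥ ^ Fintype.card X := by
    rw [det_eq_prod_diag_of_apply_eq_zero_of_not_le, ← card_univ, ← prod_const]
    · refine prod_congr rfl fun y _ => ?_
      simp [M, σ]
    · intro y w hyw
      simp [M, σ, ← disjoint_iff, disjoint_compl_right_iff, hyw]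
  rw [← rank_submatrix M (Equiv.refl X) σ]
  exact rank_of_isUnit _ ((isUnit_iff_isUnit_det _).2 (hdet ▸ (pow_ne_zero _ hg).isUnit))

end Matrix

section TripleCoeff

variable {R X Y Z : Type*} [CommSemiring R]

noncomputable def tripleCoeff (x : X) (y : Y) (z : Z) :
    (X → R) ⊗[R] ((Y → R) ⊗[R] (Z → R)) →ₗ[R] R :=
  lift ((LinearMap.proj x).smulRight (lift ((LinearMap.proj y).smulRight (LinearMap.proj z))))

@[simp]
theorem tripleCoeff_tmul (x : X) (y : Y) (z : Z) (u : X → R) (v : Y → R) (w : Z → R) :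
    tripleCoeff x y z (u ⊗ₜ[R] (v ⊗ₜ[R] w)) = u x * (v y * w z) := by
  simp [tripleCoeff]

end TripleCoeff

-- `x`, `y`, `z` mark the copies in which the excitation sits with party A, B, C respectively.
theorem tripleCoeff_Wn {n : ℕ} (x y z : Fin n → Bool) :
    tripleCoeff x y z (Wn n) = if y ⊓ z = ⊥ ∧ x = (y ⊔ z)ᶜ then 1 else 0 := by
  let code : Fin n → Fin 3 := fun k => if y k then 1 else if z k then 2 else 0
  have key (f : Fin n → Fin 3) :
      (x = (fun k => decide (f k = 0)) ∧ y = (fun k => decide (f k = 1)) ∧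
        z = (fun k => decide (f k = 2))) ↔ code = f ∧ y ⊓ z = ⊥ ∧ x = (y ⊔ z)ᶜ := by
    simp only [funext_iff, Pi.inf_apply, Pi.sup_apply, Pi.compl_apply, Pi.bot_apply, code,
      ← forall_and]
    refine forall_congr' fun k => ?_
    generalize f k = a, x k = b, y k = c, z k = d
    revert a b c d
    decide
  have hterm (f : Fin n → Fin 3) : tripleCoeff x y z (qb (fun k => decide (f k = 0)) ⊗ₜ[ℂ]
      (qb (fun k => decide (f k = 1)) ⊗ₜ[ℂ] qb (fun k => decide (f k = 2)))) =
      if code = f then (if y ⊓ z = ⊥ ∧ x = (y ⊔ z)ᶜ then 1 else 0) else 0 := by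
    rw [← ite_and]
    simp only [← key, tripleCoeff_tmul, qb, Pi.single_apply, boole_mul, ite_and]
  rw [Wn, map_sum, sum_congr rfl fun f _ => hterm f, sum_ite_eq, if_pos (mem_univ _)]

namespace Wn

variable {n r : ℕ}

theorem sum_dual_mul_eq_of_eq_sum_tmul {a b c : Fin r → V n}
    (h : Wn n = ∑ i, a i ⊗ₜ[ℂ] (b i ⊗ₜ[ℂ] c i)) (φ : Module.Dual ℂ (V n))
    (y z : Fin n → Bool) :
    ∑ i, φ (a i) * (b i y * c i z) = if y ⊓ z = ⊥ then φ (qb (y ⊔ z)ᶜ) else 0 := by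
  have hcoeff (x : Fin n → Bool) :
      ∑ i, a i x * (b i y * c i z) = if y ⊓ z = ⊥ ∧ x = (y ⊔ z)ᶜ then 1 else 0 := by
    rw [← tripleCoeff_Wn, h, map_sum]
    simp only [tripleCoeff_tmul]
  have hφ (u : V n) : φ u = ∑ x, u x * φ (qb x) := by
    rw [LinearMap.pi_apply_eq_sum_univ φ u]
    refine sum_congr rfl fun x _ => ?_
    rw [smul_eq_mul, qb]
    congr 2
    exact funext fun j => by simp only [Pi.single_apply, eq_comm]
  calc ∑ i, φ (a i) * (b i y * c i z)
      = ∑ x, φ (qb x) * ∑ i, a i x * (b i y * c i z) := by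
        simp only [hφ (a _), sum_mul, mul_sum]
        rw [sum_comm]
        exact sum_congr rfl fun _ _ => sum_congr rfl fun _ _ => by ring
    _ = if y ⊓ z = ⊥ then φ (qb (y ⊔ z)ᶜ) else 0 := by
        simp only [hcoeff, ite_and, mul_ite, mul_one, mul_zero]
        split_ifs <;> simp

theorem span_range_eq_top_of_eq_sum_tmul {a b c : Fin r → V n}
    (h : Wn n = ∑ i, a i ⊗ₜ[ℂ] (b i ⊗ₜ[ℂ] c i)) :
    Submodule.span ℂ (Set.range a) = ⊤ := by
  by_contra hne
  obtain ⟨φ, hφ, hle⟩ := (Submodule.span ℂ (Set.range a)).exists_le_ker_of_lt_top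
    (lt_top_iff_ne_top.2 hne)
  have hφa (i : Fin r) : φ (a i) = 0 := hle (Submodule.subset_span ⟨i, rfl⟩)
  refine hφ ((Pi.basisFun ℂ _).ext fun w => ?_)
  simpa [hφa, qb] using (sum_dual_mul_eq_of_eq_sum_tmul h φ ⊥ wᶜ).symm

theorem two_pow_succ_sub_one_le_of_eq_sum_tmul {a b c : Fin r → V n}
    (h : Wn n = ∑ i, a i ⊗ₜ[ℂ] (b i ⊗ₜ[ℂ] c i)) : 2 ^ (n + 1) - 1 ≤ r := by
  obtain ⟨φ, hφ, I, hI, hφI⟩ := exists_dual_apply_ne_zero_vanishing_on_finrank_sub_one a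
    (span_range_eq_top_of_eq_sum_tmul h) (e := qb ⊥) (by simp [qb])
  have hM : (of fun y z => if y ⊓ z = ⊥ then φ (qb (y ⊔ z)ᶜ) else 0) =
      ∑ i ∈ Iᶜ, vecMulVec (φ (a i) • b i) (c i) := by
    ext y z
    rw [of_apply, ← sum_dual_mul_eq_of_eq_sum_tmul h, Matrix.sum_apply,
      ← sum_compl_add_sum I, sum_eq_zero (s := I) fun i hi => by simp [hφI i hi]]
    simp [vecMulVec_apply, mul_assoc]
  have hle := rank_sum_vecMulVec_le Iᶜ (fun i => φ (a i) • b i) c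
  rw [← hM, rank_of_ite_inf_eq_bot (fun x => φ (qb x)) hφ, card_compl] at hle
  simp only [Module.finrank_fintype_fun_eq_card, Fintype.card_fun, Fintype.card_bool,
    Fintype.card_fin] at hle hI
  rw [pow_succ]
  omega

end Wn

theorem exists_fin_sum_tmul_eq {R ι A B C : Type*} [CommSemiring R] [Fintype ι]
    [AddCommMonoid A] [Module R A] [AddCommMonoid B] [Module R B] [AddCommMonoid C] [Module R C]
    (a : ι → A) (b : ι → B) (c : ι → C) :
    ∃ (r : ℕ) (a' : Fin r → A) (b' : Fin r → B) (c' : Fin r → C),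
      ∑ j, a j ⊗ₜ[R] (b j ⊗ₜ[R] c j) = ∑ i, a' i ⊗ₜ[R] (b' i ⊗ₜ[R] c' i) :=
  let e := Fintype.equivFin ι
  ⟨_, a ∘ e.symm, b ∘ e.symm, c ∘ e.symm, (e.symm.sum_comp _).symm⟩

theorem rank_Wn_lower_bound_general (n : ℕ) :
    2 ^ (n + 1) - 1 ≤ tRank (Wn n) := by
  obtain ⟨r, a, b, c, h⟩ := exists_fin_sum_tmul_eq (R := ℂ)
    (fun f : Fin n → Fin 3 => qb fun k => decide (f k = 0))
    (fun f => qb fun k => decide (f k = 1)) (fun f => qb fun k => decide (f k = 2))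
  exact le_csInf ⟨r, a, b, c, h⟩ fun _ ⟨_, _, _, h⟩ => Wn.two_pow_succ_sub_one_le_of_eq_sum_tmul h

theorem rank_Wn_lower_bound (n : ℕ) (hn : 1 ≤ n) :
    2 ^ (n + 1) - 1 ≤ tRank (Wn n) :=
  rank_Wn_lower_bound_general n
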